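/- arXiv:2306.04890 — 2 statements merged into one kernel-verified Lean document; each statement's English description precedes it below -/
import Mathlib

section
/- Define the generalized KL divergence on positive reals by D(a ‖ b) = a·log(a/b) − a + b. If p > 0 and Δ ∈ ℝ satisfy |Δ| ≤ (1/4)·p, then Δ²/p ≤ (9/2)·D(p + Δ ‖ p). -/
/-!
Since `log x ≥ 1 - 1/x`, taken at `x = √(a/b)`, the divergence `D(a‖b)` dominates the squared
Hellinger distance `(√a - √b)²`. Factor `Δ² = (p + Δ - p)²` as `(√(p+Δ) - √p)² (√(p+Δ) + √p)²`;
the second factor is at most `(9/2) p` because `p + Δ ≤ (5/4) p` gives `2 √(p+Δ) √p ≤ (9/4) p`.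
-/

open Real

theorem sq_sqrt_sub_sqrt_le_kl {a b : ℝ} (ha : 0 < a) (hb : 0 < b) :
    (√a - √b) ^ 2 ≤ a * log (a / b) - a + b := by
  have hsa : 0 < √a := sqrt_pos.mpr ha
  have hsb : 0 < √b := sqrt_pos.mpr hb
  have hlog : 2 * (1 - √b / √a) ≤ log (a / b) := by
    have h := one_sub_inv_le_log_of_pos (div_pos hsa hsb)
    rw [inv_div] at h
    calc 2 * (1 - √b / √a) ≤ 2 * log (√a / √b) := by linarith
      _ = log ((√a / √b) ^ 2) := by rw [log_pow]; norm_num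
      _ = log (a / b) := by rw [div_pow, sq_sqrt ha.le, sq_sqrt hb.le]
  have hmul : a * (2 * (1 - √b / √a)) = 2 * a - 2 * √a * √b := by
    field_simp
    linear_combination √b * mul_self_sqrt ha.le
  nlinarith [mul_le_mul_of_nonneg_left hlog ha.le, sq_sqrt ha.le, sq_sqrt hb.le]

theorem sq_sqrt_add_sqrt_le {a b : ℝ} (ha : 0 ≤ a) (hb : 0 ≤ b) (hab : a ≤ 5 / 4 * b) :
    (√a + √b) ^ 2 ≤ 9 / 2 * b := by
  have hsa : √a ≤ 9 / 8 * √b := by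
    rw [sqrt_le_left (by positivity), mul_pow, sq_sqrt hb]
    linarith
  nlinarith [sq_sqrt ha, sq_sqrt hb, sqrt_nonneg b]

/-- The squared relative price change is bounded by the generalized KL
divergence of consecutive prices. -/
theorem sq_change_le_kl
    (p Δ : ℝ) (hp : 0 < p) (hΔ : |Δ| ≤ (1 / 4) * p) :
    Δ ^ 2 / p ≤ (9 / 2) * ((p + Δ) * Real.log ((p + Δ) / p) - (p + Δ) + p) := by
  obtain ⟨hΔ_lo, hΔ_hi⟩ := abs_le.mp hΔ
  have ha : 0 < p + Δ := by linarith
  have hΔ_sq : Δ ^ 2 = (√(p + Δ) - √p) ^ 2 * (√(p + Δ) + √p) ^ 2 := by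
    rw [← mul_pow, mul_comm, ← sq_sub_sq, sq_sqrt ha.le, sq_sqrt hp.le]
    ring
  have hsum : (√(p + Δ) + √p) ^ 2 / p ≤ 9 / 2 := by
    rw [div_le_iff₀ hp]
    exact sq_sqrt_add_sqrt_le ha.le hp.le (by linarith)
  calc Δ ^ 2 / p = (√(p + Δ) - √p) ^ 2 * ((√(p + Δ) + √p) ^ 2 / p) := by
        rw [hΔ_sq, mul_div_assoc]
    _ ≤ (√(p + Δ) - √p) ^ 2 * (9 / 2) := mul_le_mul_of_nonneg_left hsum (sq_nonneg _)
    _ ≤ (9 / 2) * ((p + Δ) * Real.log ((p + Δ) / p) - (p + Δ) + p) := by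
        rw [mul_comm]
        gcongr
        exact sq_sqrt_sub_sqrt_le_kl ha hp
end

section
/- Let f, h : ℝ^n → ℝ be convex with h differentiable, and define the Bregman divergence D_h(x, y) = h(x) − h(y) − ∇h(y)·(x − y). Let x* minimize f over a convex set V and let the mirror descent iterates satisfy x^{(t+1)} = argmin_{x ∈ V} { f(x^{(t)}) + g_t·(x − x^{(t)}) + γ·D_h(x, x^{(t)}) } with g_t ∈ ∂f(x^{(t)}), and suppose for all t, f(x^{(t+1)}) ≤ f(x^{(t)}) + g_t·(x^{(t+1)} − x^{(t)}) + γ·D_h(x^{(t+1)}, x^{(t)}). Then for all t ≥ 1, f(x^{(t)}) − f(x*) ≤ (γ/t)·D_h(x*, x^{(0)}). -/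
/-!
The first-order optimality condition of the mirror step `x_{t+1}`, tested against `x*`, combined
with the three-point identity for Bregman divergences, the subgradient inequality and Bregman
smoothness along the step, gives `f(x_{t+1}) - f(x*) ≤ γ (D(x*, x_t) - D(x*, x_{t+1}))`.
Testing the same step against `x_t` shows that `f(x_t)` is nonincreasing, so the potential
`t (f(x_t) - f(x*)) + γ D(x*, x_t)` is nonincreasing as well; and `D ≥ 0` by convexity of `h`.
-/

open Set

variable {E : Type*} [NormedAddCommGroup E] [NormedSpace ℝ E]

theorem ConvexOn.add_fderiv_sub_le {s : Set E} {h : E → ℝ} (hh : ConvexOn ℝ s h) {a b : E}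
    (ha : a ∈ s) (hb : b ∈ s) (hd : DifferentiableAt ℝ h a) :
    h a + fderiv ℝ h a (b - a) ≤ h b := by
  have hline : ConvexOn ℝ (AffineMap.lineMap a b ⁻¹' s) (h ∘ AffineMap.lineMap a b) :=
    hh.comp_affineMap _
  have hd' : HasFDerivAt h (fderiv ℝ h a) (AffineMap.lineMap a b (0 : ℝ)) := by
    simpa using hd.hasFDerivAt
  have hslope := hline.le_slope_of_hasDerivAt (x := 0) (y := 1) (by simpa) (by simpa) one_pos
    (hd'.comp_hasDerivAt 0 AffineMap.hasDerivAt_lineMap)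
  simp only [slope_def_field, Function.comp_apply, AffineMap.lineMap_apply_zero,
    AffineMap.lineMap_apply_one, sub_zero, div_one] at hslope
  linarith

noncomputable def bregmanDiv (h : E → ℝ) (x y : E) : ℝ :=
  h x - h y - fderiv ℝ h y (x - y)

@[simp]
theorem bregmanDiv_self (h : E → ℝ) (x : E) : bregmanDiv h x x = 0 := by
  simp [bregmanDiv]

theorem bregmanDiv_nonneg {s : Set E} {h : E → ℝ} (hh : ConvexOn ℝ s h) {x y : E} (hx : x ∈ s)
    (hy : y ∈ s) (hd : DifferentiableAt ℝ h y) : 0 ≤ bregmanDiv h x y := by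
  have := hh.add_fderiv_sub_le hy hx hd
  rw [bregmanDiv]
  linarith

theorem bregmanDiv_three_point (h : E → ℝ) (x y z : E) :
    bregmanDiv h z x =
      bregmanDiv h y x + bregmanDiv h z y + (fderiv ℝ h y - fderiv ℝ h x) (z - y) := by
  have hsplit : z - x = (z - y) + (y - x) := by abel
  simp only [bregmanDiv, sub_apply, hsplit, map_add]
  ring

theorem hasFDerivAt_bregmanDiv_left {h : E → ℝ} {x y : E} (hd : DifferentiableAt ℝ h y) :
    HasFDerivAt (fun z ↦ bregmanDiv h z x) (fderiv ℝ h y - fderiv ℝ h x) y := by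
  have hlin : HasFDerivAt (fun z ↦ fderiv ℝ h x (z - x)) (fderiv ℝ h x) y := by
    simpa using (fderiv ℝ h x).hasFDerivAt.sub_const (fderiv ℝ h x x)
  exact (hd.hasFDerivAt.sub_const (h x)).sub hlin

namespace MirrorDescent

variable {V : Set E} {f h : E → ℝ} {γ : ℝ} {ℓ : E →L[ℝ] ℝ} {w a z : E}

theorem step_le (hw : w ∈ V) (hmin : IsMinOn (fun y ↦ ℓ y + γ * bregmanDiv h y w) V a)
    (hsmooth : f a ≤ f w + ℓ (a - w) + γ * bregmanDiv h a w) : f a ≤ f w := by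
  have hmin_w : ℓ a + γ * bregmanDiv h a w ≤ ℓ w + γ * bregmanDiv h w w := hmin hw
  rw [bregmanDiv_self, mul_zero, add_zero] at hmin_w
  rw [map_sub] at hsmooth
  linarith

theorem step_sub_le (hV : Convex ℝ V) (ha : a ∈ V) (hz : z ∈ V) (hd : DifferentiableAt ℝ h a)
    (hmin : IsMinOn (fun y ↦ ℓ y + γ * bregmanDiv h y w) V a)
    (hsmooth : f a ≤ f w + ℓ (a - w) + γ * bregmanDiv h a w)
    (hsub : f w + ℓ (z - w) ≤ f z) :
    f a - f z ≤ γ * (bregmanDiv h z w - bregmanDiv h z a) := by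
  have hopt : 0 ≤ ℓ (z - a) + γ * (fderiv ℝ h a - fderiv ℝ h w) (z - a) :=
    hmin.localize.hasFDerivWithinAt_nonneg
      ((ℓ.hasFDerivAt.add ((hasFDerivAt_bregmanDiv_left hd).const_mul γ)).hasFDerivWithinAt)
      (sub_mem_posTangentConeAt_of_segment_subset (hV.segment_subset ha hz))
  have hthree : γ * (bregmanDiv h z w - bregmanDiv h z a) =
      γ * bregmanDiv h a w + γ * (fderiv ℝ h a - fderiv ℝ h w) (z - a) := by
    rw [bregmanDiv_three_point h w a z]
    ring
  have hℓ : ℓ (z - w) = ℓ (z - a) + ℓ (a - w) := by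
    rw [← map_add, sub_add_sub_cancel]
  linarith

theorem potential_le (hV : Convex ℝ V) (hz : z ∈ V) (hd : Differentiable ℝ h) {x : ℕ → E}
    {g : ℕ → E →L[ℝ] ℝ} (hmem : ∀ t, x (t + 1) ∈ V)
    (hmin : ∀ t, IsMinOn (fun y ↦ g t y + γ * bregmanDiv h y (x t)) V (x (t + 1)))
    (hsmooth : ∀ t,
      f (x (t + 1)) ≤ f (x t) + g t (x (t + 1) - x t) + γ * bregmanDiv h (x (t + 1)) (x t))
    (hsub : ∀ t, f (x t) + g t (z - x t) ≤ f z) (t : ℕ) :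
    t * (f (x t) - f z) + γ * bregmanDiv h z (x t) ≤ γ * bregmanDiv h z (x 0) := by
  induction t with
  | zero => simp
  | succ t ih =>
    have hdesc := step_sub_le hV (hmem t) hz (hd _) (hmin t) (hsmooth t) (hsub t)
    have hmono : t * (f (x (t + 1)) - f (x t)) ≤ 0 := by
      cases t with
      | zero => simp
      | succ s =>
        exact mul_nonpos_of_nonneg_of_nonpos (by positivity)
          (sub_nonpos.2 (step_le (hmem s) (hmin (s + 1)) (hsmooth (s + 1))))
    push_cast
    linarith

end MirrorDescent

theorem mirror_descent_convergence_general
    (n : ℕ) (V : Set (Fin n → ℝ)) (hV : Convex ℝ V)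
    (f h : (Fin n → ℝ) → ℝ)
    (hh : ConvexOn ℝ Set.univ h)
    (hhdiff : Differentiable ℝ h)
    (D : (Fin n → ℝ) → (Fin n → ℝ) → ℝ)
    (hD : ∀ x y, D x y = h x - h y - fderiv ℝ h y (x - y))
    (γ : ℝ) (hγ : 0 < γ)
    (xstar : Fin n → ℝ) (hxstar : xstar ∈ V)
    (x : ℕ → (Fin n → ℝ)) (g : ℕ → (Fin n → ℝ))
    (hsubgrad : ∀ t, ∀ y : Fin n → ℝ,
      f (x t) + ∑ i, g t i * (y i - x t i) ≤ f y)
    (hupdate : ∀ t, x (t + 1) ∈ V ∧ ∀ y ∈ V,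
      f (x t) + (∑ i, g t i * (x (t + 1) i - x t i)) + γ * D (x (t + 1)) (x t) ≤
        f (x t) + (∑ i, g t i * (y i - x t i)) + γ * D y (x t))
    (hsmooth : ∀ t,
      f (x (t + 1)) ≤
        f (x t) + (∑ i, g t i * (x (t + 1) i - x t i)) + γ * D (x (t + 1)) (x t)) :
    ∀ t : ℕ, 1 ≤ t → f (x t) - f xstar ≤ (γ / t) * D xstar (x 0) := by
  obtain rfl : D = bregmanDiv h := funext₂ hD
  let ℓ : ℕ → (Fin n → ℝ) →L[ℝ] ℝ := fun t ↦ ∑ i, g t i • ContinuousLinearMap.proj i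
  have hℓ : ∀ t a w, ∑ i, g t i * (a i - w i) = ℓ t (a - w) := by simp [ℓ]
  simp only [hℓ] at hsubgrad hupdate hsmooth
  have hmin : ∀ t, IsMinOn (fun y ↦ ℓ t y + γ * bregmanDiv h y (x t)) V (x (t + 1)) := by
    intro t y hy
    have hupdate_y := (hupdate t).2 y hy
    rw [map_sub, map_sub] at hupdate_y
    show ℓ t (x (t + 1)) + γ * bregmanDiv h (x (t + 1)) (x t) ≤ ℓ t y + γ * bregmanDiv h y (x t)
    linarith
  intro t ht
  obtain ⟨s, rfl⟩ := Nat.exists_eq_add_of_le' ht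
  have hpot := MirrorDescent.potential_le hV hxstar hhdiff (fun t ↦ (hupdate t).1) hmin hsmooth
    (fun t ↦ hsubgrad t xstar) (s + 1)
  have hγD_nonneg := mul_nonneg hγ.le
    (bregmanDiv_nonneg (hh.subset (subset_univ V) hV) hxstar (hupdate s).1 (hhdiff _))
  rw [div_mul_eq_mul_div, le_div_iff₀ (by positivity)]
  linarith

/-- Convergence of mirror descent for Bregman-smooth objectives
(Birnbaum–Devanur–Xiao, Cheung–Cole–Devanur). -/
theorem mirror_descent_convergence
    (n : ℕ) (V : Set (Fin n → ℝ)) (hV : Convex ℝ V)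
    (f h : (Fin n → ℝ) → ℝ)
    (hf : ConvexOn ℝ V f) (hh : ConvexOn ℝ Set.univ h)
    (hhdiff : Differentiable ℝ h)
    (D : (Fin n → ℝ) → (Fin n → ℝ) → ℝ)
    (hD : ∀ x y, D x y = h x - h y - fderiv ℝ h y (x - y))
    (γ : ℝ) (hγ : 0 < γ)
    (xstar : Fin n → ℝ) (hxstar : xstar ∈ V)
    (hxstar_min : ∀ y ∈ V, f xstar ≤ f y)
    (x : ℕ → (Fin n → ℝ)) (g : ℕ → (Fin n → ℝ))
    (hx0 : x 0 ∈ V)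
    (hsubgrad : ∀ t, ∀ y : Fin n → ℝ,
      f (x t) + ∑ i, g t i * (y i - x t i) ≤ f y)
    (hupdate : ∀ t, x (t + 1) ∈ V ∧ ∀ y ∈ V,
      f (x t) + (∑ i, g t i * (x (t + 1) i - x t i)) + γ * D (x (t + 1)) (x t) ≤
        f (x t) + (∑ i, g t i * (y i - x t i)) + γ * D y (x t))
    (hsmooth : ∀ t,
      f (x (t + 1)) ≤
        f (x t) + (∑ i, g t i * (x (t + 1) i - x t i)) + γ * D (x (t + 1)) (x t)) :
    ∀ t : ℕ, 1 ≤ t → f (x t) - f xstar ≤ (γ / t) * D xstar (x 0) :=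
  mirror_descent_convergence_general n V hV f h hh hhdiff D hD γ hγ xstar hxstar x g hsubgrad
    hupdate hsmooth
end
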